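/- arXiv:2504.18358 — 7 statements merged into one kernel-verified Lean document; each statement's English description precedes it below -/
import Mathlib

section
/- Let H be a complex Hilbert space and let P₁, P₂ ∈ Σ⁺(H) be positive operators. Then the operator I + P₁P₂ is boundedly invertible in ℒ(H), and its inverse satisfies ‖(I + P₁P₂)⁻¹‖ ≤ 1 + ‖P₁‖‖P₂‖. -/
/-!
For `y = (1 + P₁ P₂) x`, positivity of `P₁` gives `re ⟪P₂ x, x⟫ ≤ re ⟪P₂ x, y⟫`, and together with
`‖P₂ x‖² ≤ ‖P₂‖ re ⟪P₂ x, x⟫` (write `P₂ = S²` with `S = √P₂`) this yields `‖P₂ x‖ ≤ ‖P₂‖ ‖y‖`,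
hence `‖x‖ ≤ ‖y‖ + ‖P₁ P₂ x‖ ≤ (1 + ‖P₁‖ ‖P₂‖) ‖y‖`. The adjoint `1 + P₂ P₁` obeys the same bound,
so `1 + P₁ P₂` is bounded below with dense range, hence invertible, and the lower bound is the
bound on the norm of the inverse.
-/

open ContinuousLinearMap
open scoped InnerProductSpace

namespace ContinuousLinearMap

section Normed

variable {𝕜 E F : Type*} [NontriviallyNormedField 𝕜] [NormedAddCommGroup E] [NormedSpace 𝕜 E]
  [NormedAddCommGroup F] [NormedSpace 𝕜 F]

theorem antilipschitz_of_forall_norm_le_mul {T : E →L[𝕜] F} {C : ℝ}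
    (hT : ∀ x, ‖x‖ ≤ C * ‖T x‖) : AntilipschitzWith C.toNNReal T :=
  T.antilipschitz_of_bound fun x =>
    (hT x).trans (mul_le_mul_of_nonneg_right (Real.le_coe_toNNReal C) (norm_nonneg _))

theorem norm_ringInverse_le {T : E →L[𝕜] E} (hT : IsUnit T) {C : ℝ} (hC : 0 ≤ C)
    (hbound : ∀ x, ‖x‖ ≤ C * ‖T x‖) : ‖Ring.inverse T‖ ≤ C :=
  opNorm_le_bound _ hC fun y => by
    have hTy : T (Ring.inverse T y) = y := by
      rw [← mul_apply_eq_comp, Ring.mul_inverse_cancel T hT, one_apply_eq_self]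
    simpa only [hTy] using hbound (Ring.inverse T y)

end Normed

theorem isUnit_of_forall_norm_le_mul_of_adjoint {𝕜 E : Type*} [RCLike 𝕜] [NormedAddCommGroup E]
    [InnerProductSpace 𝕜 E] [CompleteSpace E] {T : E →L[𝕜] E} {C : ℝ}
    (hT : ∀ x, ‖x‖ ≤ C * ‖T x‖) (hTadj : ∀ x, ‖x‖ ≤ C * ‖adjoint T x‖) : IsUnit T := by
  rw [isUnit_iff_bijective, bijective_iff_dense_range_and_antilipschitz]
  refine ⟨?_, _, antilipschitz_of_forall_norm_le_mul hT⟩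
  rw [Submodule.topologicalClosure_eq_top_iff, orthogonal_range, LinearMap.ker_eq_bot]
  exact (antilipschitz_of_forall_norm_le_mul hTadj).injective

section Positive

variable {H : Type*} [NormedAddCommGroup H] [InnerProductSpace ℂ H] [CompleteSpace H]

theorem IsPositive.norm_apply_sq_le {P : H →L[ℂ] H} (hP : P.IsPositive) (x : H) :
    ‖P x‖ ^ 2 ≤ ‖P‖ * RCLike.re ⟪P x, x⟫_ℂ := by
  have hP₀ : 0 ≤ P := (nonneg_iff_isPositive P).mpr hP
  set S := CFC.sqrt P
  have hS : IsSelfAdjoint S := IsSelfAdjoint.of_nonneg (CFC.sqrt_nonneg P)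
  have hSS : S * S = P := CFC.sqrt_mul_sqrt_self P hP₀
  have hSx : ‖S x‖ ^ 2 = RCLike.re ⟪P x, x⟫_ℂ := by
    rw [apply_norm_sq_eq_inner_adjoint_left, ← star_eq_adjoint, hS.star_eq, ← mul_def, hSS]
  have hnorm : ‖S‖ ^ 2 = ‖P‖ := by
    rw [sq, ← CStarRing.norm_star_mul_self, hS.star_eq, hSS]
  calc ‖P x‖ ^ 2 = ‖S (S x)‖ ^ 2 := by rw [← hSS, mul_apply_eq_comp]
    _ ≤ (‖S‖ * ‖S x‖) ^ 2 := by gcongr; exact le_opNorm S (S x)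
    _ = ‖P‖ * RCLike.re ⟪P x, x⟫_ℂ := by rw [mul_pow, hnorm, hSx]

theorem IsPositive.norm_apply_le_mul_norm_one_add_mul_apply {P₁ P₂ : H →L[ℂ] H}
    (h₁ : P₁.IsPositive) (h₂ : P₂.IsPositive) (x : H) :
    ‖P₂ x‖ ≤ ‖P₂‖ * ‖(1 + P₁ * P₂) x‖ := by
  set y := (1 + P₁ * P₂) x
  have hy : y = x + P₁ (P₂ x) := by simp [y, mul_apply_eq_comp]
  have hsq : ‖P₂ x‖ ^ 2 ≤ ‖P₂ x‖ * (‖P₂‖ * ‖y‖) :=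
    calc ‖P₂ x‖ ^ 2 ≤ ‖P₂‖ * RCLike.re ⟪P₂ x, x⟫_ℂ := h₂.norm_apply_sq_le x
      _ ≤ ‖P₂‖ * RCLike.re ⟪P₂ x, y⟫_ℂ := by
          refine mul_le_mul_of_nonneg_left ?_ (norm_nonneg _)
          rw [hy, inner_add_right, map_add, le_add_iff_nonneg_right]
          exact h₁.re_inner_nonneg_right (P₂ x)
      _ ≤ ‖P₂‖ * (‖P₂ x‖ * ‖y‖) := by
          gcongr
          exact (RCLike.re_le_norm _).trans (norm_inner_le_norm _ _)
      _ = ‖P₂ x‖ * (‖P₂‖ * ‖y‖) := mul_left_comm _ _ _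
  rcases (norm_nonneg (P₂ x)).eq_or_lt with h0 | h0
  · rw [← h0]; positivity
  · exact le_of_mul_le_mul_left (by rwa [← sq]) h0

theorem IsPositive.norm_le_mul_norm_one_add_mul_apply {P₁ P₂ : H →L[ℂ] H}
    (h₁ : P₁.IsPositive) (h₂ : P₂.IsPositive) (x : H) :
    ‖x‖ ≤ (1 + ‖P₁‖ * ‖P₂‖) * ‖(1 + P₁ * P₂) x‖ := by
  have hy : (1 + P₁ * P₂) x = x + P₁ (P₂ x) := by simp [mul_apply_eq_comp]
  have hP₂x := h₁.norm_apply_le_mul_norm_one_add_mul_apply h₂ x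
  calc ‖x‖ ≤ ‖x + P₁ (P₂ x)‖ + ‖P₁ (P₂ x)‖ := norm_le_add_norm_add _ _
    _ ≤ ‖(1 + P₁ * P₂) x‖ + ‖P₁‖ * (‖P₂‖ * ‖(1 + P₁ * P₂) x‖) := by
        rw [← hy]
        gcongr
        exact (le_opNorm _ _).trans (by gcongr)
    _ = (1 + ‖P₁‖ * ‖P₂‖) * ‖(1 + P₁ * P₂) x‖ := by ring

end Positive

end ContinuousLinearMap

/-- For positive operators `P₁, P₂` on a complex Hilbert space `H`,
the operator `I + P₁P₂` is boundedly invertible and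
`‖(I + P₁P₂)⁻¹‖ ≤ 1 + ‖P₁‖‖P₂‖`. -/
theorem stmt_0 {H : Type*} [NormedAddCommGroup H] [InnerProductSpace ℂ H] [CompleteSpace H]
    (P₁ P₂ : H →L[ℂ] H) (h₁ : P₁.IsPositive) (h₂ : P₂.IsPositive) :
    IsUnit (1 + P₁ * P₂) ∧
      ‖Ring.inverse (1 + P₁ * P₂)‖ ≤ 1 + ‖P₁‖ * ‖P₂‖ := by
  have hbound := h₁.norm_le_mul_norm_one_add_mul_apply h₂
  have hbound_adjoint : ∀ x, ‖x‖ ≤ (1 + ‖P₁‖ * ‖P₂‖) * ‖adjoint (1 + P₁ * P₂) x‖ := by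
    rw [← star_eq_adjoint, star_add, star_one, star_mul, h₁.isSelfAdjoint.star_eq,
      h₂.isSelfAdjoint.star_eq, mul_comm ‖P₁‖]
    exact h₂.norm_le_mul_norm_one_add_mul_apply h₁
  have hunit := isUnit_of_forall_norm_le_mul_of_adjoint hbound hbound_adjoint
  exact ⟨hunit, norm_ringInverse_le hunit (by positivity) hbound⟩
end

section
/- Let H be a complex Hilbert space, let P₀, S ∈ Σ⁺(H) with ‖P₀‖ ≤ ρ, and let T > 0. Then for every t ∈ [0, T] the operator I + tP₀S is boundedly invertible and ‖(I + tP₀S)⁻¹P₀‖ ≤ (1 + Tρ‖S‖)ρ. -/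
/-!
Write `P₀ = Q²` with `Q = √P₀ ≥ 0`. Since `1 + Q (tS) Q ≥ 1` is invertible with inverse of norm
at most `1`, so is `1 + Q · Q (tS)` (the units `1 + xy` and `1 + yx` determine each other), and
the push-through identity gives `(1 + tP₀S)⁻¹ P₀ = Q (1 + Q (tS) Q)⁻¹ Q`, whose norm is at most
`‖Q‖² = ‖P₀‖ ≤ ρ`.
-/

section Ring

variable {R : Type*} [Ring R]

theorem isUnit_one_add_mul_of_isUnit_one_add_mul {x y : R} (h : IsUnit (1 + y * x)) :
    IsUnit (1 + x * y) := by
  refine ⟨⟨1 + x * y, 1 - x * Ring.inverse (1 + y * x) * y, ?_, ?_⟩, rfl⟩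
  · calc (1 + x * y) * (1 - x * Ring.inverse (1 + y * x) * y)
        = 1 + x * y - x * ((1 + y * x) * Ring.inverse (1 + y * x)) * y := by noncomm_ring
      _ = 1 := by rw [Ring.mul_inverse_cancel _ h]; noncomm_ring
  · calc (1 - x * Ring.inverse (1 + y * x) * y) * (1 + x * y)
        = 1 + x * y - x * (Ring.inverse (1 + y * x) * (1 + y * x)) * y := by noncomm_ring
      _ = 1 := by rw [Ring.inverse_mul_cancel _ h]; noncomm_ring

theorem Ring.inverse_one_add_mul_mul {x y : R} (h : IsUnit (1 + y * x)) :
    Ring.inverse (1 + x * y) * x = x * Ring.inverse (1 + y * x) := by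
  have h' := isUnit_one_add_mul_of_isUnit_one_add_mul h
  have hcomm : (1 + x * y) * x = x * (1 + y * x) := by noncomm_ring
  calc Ring.inverse (1 + x * y) * x
      = Ring.inverse (1 + x * y) * x * ((1 + y * x) * Ring.inverse (1 + y * x)) := by
        rw [Ring.mul_inverse_cancel _ h, mul_one]
    _ = Ring.inverse (1 + x * y) * ((1 + x * y) * x) * Ring.inverse (1 + y * x) := by
        rw [hcomm]; simp only [mul_assoc]
    _ = x * Ring.inverse (1 + y * x) := by
        rw [← mul_assoc, Ring.inverse_mul_cancel _ h', one_mul]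

end Ring

section CStarAlgebra

variable {A : Type*} [CStarAlgebra A] [PartialOrder A] [StarOrderedRing A]

theorem CStarAlgebra.isUnit_one_add_of_nonneg {b : A} (hb : 0 ≤ b) : IsUnit (1 + b) :=
  CStarAlgebra.isUnit_of_le 1 (le_add_of_nonneg_right hb)

theorem CStarAlgebra.norm_inverse_one_add_le_one {b : A} (hb : 0 ≤ b) :
    ‖Ring.inverse (1 + b)‖ ≤ 1 := by
  have hle : (1 : A) ≤ 1 + b := le_add_of_nonneg_right hb
  lift 1 + b to Aˣ using CStarAlgebra.isUnit_one_add_of_nonneg hb with u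
  rw [Ring.inverse_unit]
  exact (CStarAlgebra.norm_le_one_iff_of_nonneg _
    (CFC.inv_nonneg_of_nonneg u (zero_le_one.trans hle))).mpr
    (CStarAlgebra.inv_le_one hle)

theorem CStarAlgebra.isUnit_one_add_mul_of_nonneg {p a : A} (hp : 0 ≤ p) (ha : 0 ≤ a) :
    IsUnit (1 + p * a) := by
  rw [← CFC.sqrt_mul_sqrt_self p, mul_assoc]
  exact isUnit_one_add_mul_of_isUnit_one_add_mul <| isUnit_one_add_of_nonneg <|
    mul_assoc (CFC.sqrt p) a _ ▸ conjugate_nonneg_of_nonneg ha (CFC.sqrt_nonneg p)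

theorem CStarAlgebra.norm_inverse_one_add_mul_mul_le {p a : A} (hp : 0 ≤ p) (ha : 0 ≤ a) :
    ‖Ring.inverse (1 + p * a) * p‖ ≤ ‖p‖ := by
  set q := CFC.sqrt p
  have hqq : q * q = p := CFC.sqrt_mul_sqrt_self p
  have hqaq : 0 ≤ q * a * q := conjugate_nonneg_of_nonneg ha (CFC.sqrt_nonneg p)
  have hpush : Ring.inverse (1 + p * a) * p = q * Ring.inverse (1 + q * a * q) * q := by
    rw [← hqq, mul_assoc q q a, ← mul_assoc,
      Ring.inverse_one_add_mul_mul (isUnit_one_add_of_nonneg hqaq)]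
  calc ‖Ring.inverse (1 + p * a) * p‖
      ≤ ‖q‖ * ‖Ring.inverse (1 + q * a * q)‖ * ‖q‖ := hpush ▸ norm_mul₃_le
    _ ≤ ‖q‖ * 1 * ‖q‖ := by gcongr; exact norm_inverse_one_add_le_one hqaq
    _ = ‖p‖ := by rw [mul_one, CFC.norm_sqrt p, Real.mul_self_sqrt (norm_nonneg p)]

end CStarAlgebra

theorem stmt_1_general {H : Type*} [NormedAddCommGroup H] [InnerProductSpace ℂ H] [CompleteSpace H]
    (P₀ S : H →L[ℂ] H) (hP₀ : P₀.IsPositive) (hS : S.IsPositive)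
    (ρ T : ℝ) (hρ : ‖P₀‖ ≤ ρ) :
    ∀ t ∈ Set.Icc (0 : ℝ) T,
      IsUnit (1 + t • (P₀ * S)) ∧
        ‖Ring.inverse (1 + t • (P₀ * S)) * P₀‖ ≤ (1 + T * ρ * ‖S‖) * ρ := by
  rintro t ⟨ht, htT⟩
  have htS : 0 ≤ t • S := smul_nonneg ht ((S.nonneg_iff_isPositive).mpr hS)
  have hP : 0 ≤ P₀ := (P₀.nonneg_iff_isPositive).mpr hP₀
  have hρ0 : 0 ≤ ρ := (norm_nonneg P₀).trans hρ
  have hTρS : 0 ≤ T * ρ * ‖S‖ := by have := ht.trans htT; positivity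
  rw [← mul_smul_comm]
  exact ⟨CStarAlgebra.isUnit_one_add_mul_of_nonneg hP htS,
    (CStarAlgebra.norm_inverse_one_add_mul_mul_le hP htS).trans <|
      hρ.trans (le_mul_of_one_le_left hρ0 (le_add_of_nonneg_right hTρS))⟩

/-- For positive operators `P₀, S` on a complex Hilbert space with `‖P₀‖ ≤ ρ`,
and `T > 0`, for every `t ∈ [0, T]` the operator `I + tP₀S` is boundedly invertible and
`‖(I + tP₀S)⁻¹P₀‖ ≤ (1 + Tρ‖S‖)ρ`. -/
theorem stmt_1 {H : Type*} [NormedAddCommGroup H] [InnerProductSpace ℂ H] [CompleteSpace H]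
    (P₀ S : H →L[ℂ] H) (hP₀ : P₀.IsPositive) (hS : S.IsPositive)
    (ρ T : ℝ) (hρ : ‖P₀‖ ≤ ρ) (hT : 0 < T) :
    ∀ t ∈ Set.Icc (0 : ℝ) T,
      IsUnit (1 + t • (P₀ * S)) ∧
        ‖Ring.inverse (1 + t • (P₀ * S)) * P₀‖ ≤ (1 + T * ρ * ‖S‖) * ρ :=
  stmt_1_general P₀ S hP₀ hS ρ T hρ
end

section
/- Let H be a complex Hilbert space and let P₀, S ∈ Σ⁺(H). Define P(t) = (I + tP₀S)⁻¹P₀ for t ≥ 0. Then P(0) = P₀ and for every t ≥ 0 the map P : [0, ∞) → ℒ(H) is differentiable at t (in the operator norm), with derivative P'(t) = −P(t) S P(t). That is, P solves the operator-valued differential equation Ṗ = −PSP with initial condition P(0) = P₀. -/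
/-!
For `t ≥ 0` the operator `1 + (t P₀) S` is invertible: away from `0`, the spectrum of a product
`a b` of positive elements agrees with that of `√a b √a ≥ 0`, so it does not contain `-1`.
Differentiating `s ↦ (1 + s P₀ S)⁻¹` by the rule `(X⁻¹)' = -X⁻¹ X' X⁻¹` then gives
`P' = -(1 + t P₀ S)⁻¹ P₀ S (1 + t P₀ S)⁻¹ P₀ = -P S P`.
-/

theorem CStarAlgebra.isUnit_one_add_mul_of_nonneg_s4 {A : Type*} [CStarAlgebra A] [PartialOrder A]
    [StarOrderedRing A] {a b : A} (ha : 0 ≤ a) (hb : 0 ≤ b) : IsUnit (1 + a * b) := by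
  have hsqrt : IsSelfAdjoint (CFC.sqrt a) := (CFC.sqrt_nonneg a).isSelfAdjoint
  have hconj : 0 ≤ CFC.sqrt a * b * CFC.sqrt a := by
    simpa [hsqrt.star_eq] using star_left_conjugate_nonneg hb (CFC.sqrt a)
  have hspec : (-1 : ℝ) ∉ spectrum ℝ (a * b) := by
    intro hmem
    have h : (-1 : ℝ) ∈ spectrum ℝ (a * b) \ {0} := ⟨hmem, by norm_num⟩
    rw [← CFC.sqrt_mul_sqrt_self a ha, mul_assoc, spectrum.nonzero_mul_comm] at h
    linarith [spectrum_nonneg_of_nonneg hconj h.1]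
  rw [spectrum.notMem_iff, ← IsUnit.neg_iff] at hspec
  simpa [add_comm] using hspec

theorem HasDerivAt.ringInverse {𝕜 R : Type*} [NontriviallyNormedField 𝕜] [NormedRing R]
    [HasSummableGeomSeries R] [NormedAlgebra 𝕜 R] {f : 𝕜 → R} {f' : R} {t : 𝕜}
    (hf : HasDerivAt f f' t) (ht : IsUnit (f t)) :
    HasDerivAt (fun s => Ring.inverse (f s))
      (-(Ring.inverse (f t) * f' * Ring.inverse (f t))) t := by
  obtain ⟨u, hu⟩ := ht
  have hinv := hasFDerivAt_ringInverse (𝕜 := 𝕜) u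
  rw [hu] at hinv
  rw [← hu, Ring.inverse_unit]
  exact hinv.comp_hasDerivAt t hf

/-- For positive operators `P₀, S` on a complex Hilbert space, the map
`P(t) = (I + tP₀S)⁻¹P₀` satisfies `P(0) = P₀` and is differentiable on `[0, ∞)` (in operator
norm) with `P'(t) = −P(t) S P(t)`; i.e. it solves `Ṗ = −PSP`, `P(0) = P₀`. -/
theorem stmt_4 {H : Type*} [NormedAddCommGroup H] [InnerProductSpace ℂ H] [CompleteSpace H]
    (P₀ S : H →L[ℂ] H) (hP₀ : P₀.IsPositive) (hS : S.IsPositive)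
    (P : ℝ → H →L[ℂ] H) (hP : ∀ t : ℝ, P t = Ring.inverse (1 + t • (P₀ * S)) * P₀) :
    P 0 = P₀ ∧
      ∀ t : ℝ, 0 ≤ t → HasDerivWithinAt P (-(P t * S * P t)) (Set.Ici 0) t := by
  refine ⟨by simp [hP], fun t ht => ?_⟩
  have hunit : IsUnit (1 + t • (P₀ * S)) := by
    rw [← smul_mul_assoc]
    exact CStarAlgebra.isUnit_one_add_mul_of_nonneg_s4
      (smul_nonneg ht ((ContinuousLinearMap.nonneg_iff_isPositive P₀).mpr hP₀))
      ((ContinuousLinearMap.nonneg_iff_isPositive S).mpr hS)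
  have hline : HasDerivAt (fun s : ℝ => 1 + s • (P₀ * S)) (P₀ * S) t := by
    simpa using ((hasDerivAt_id t).smul_const (P₀ * S)).const_add 1
  have hderiv := (hline.ringInverse hunit).mul_const P₀
  have hval : -(P t * S * P t) = -(Ring.inverse (1 + t • (P₀ * S)) * (P₀ * S) *
      Ring.inverse (1 + t • (P₀ * S))) * P₀ := by
    rw [hP t]
    noncomm_ring
  rw [hval, show P = fun s => Ring.inverse (1 + s • (P₀ * S)) * P₀ from funext hP]
  exact hderiv.hasDerivWithinAt
end

section
/- Let H be a complex Hilbert space and let P₀, S ∈ Σ⁺(H). Then the map t ↦ (I + tP₀S)⁻¹P₀ from [0, ∞) into ℒ(H) is infinitely differentiable on [0, ∞) (smooth of class C^∞ with respect to the operator norm on ℒ(H)). -/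
set_option synthInstance.maxHeartbeats 1000000
set_option maxHeartbeats 1000000

open ContinuousLinearMap in
lemma aux_isUnit {H : Type*} [NormedAddCommGroup H] [InnerProductSpace ℂ H] [CompleteSpace H]
    (P₀ S : H →L[ℂ] H) (hP₀ : P₀.IsPositive) (hS : S.IsPositive) {t : ℝ} (ht : 0 ≤ t) :
    IsUnit (1 + t • (P₀ * S)) := by
  rcases ht.eq_or_lt with h | h
  · simp [← h]
  -- square root of P₀
  have hP₀' : (0 : H →L[ℂ] H) ≤ P₀ := (ContinuousLinearMap.nonneg_iff_isPositive P₀).mpr hP₀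
  set Q : H →L[ℂ] H := CFC.sqrt P₀ with hQdef
  have hQQ : Q * Q = P₀ := CFC.sqrt_mul_sqrt_self P₀ hP₀'
  have hQ0 : (0 : H →L[ℂ] H) ≤ Q := CFC.sqrt_nonneg (a := P₀)
  have hQsa : IsSelfAdjoint Q := IsSelfAdjoint.of_nonneg hQ0
  -- the conjugated operator is positive
  have hQSQ : (0 : H →L[ℂ] H) ≤ Q * S * Q := by
    rw [ContinuousLinearMap.nonneg_iff_isPositive]
    have := hS.conj_adjoint Q
    rwa [hQsa.adjoint_eq] at this
  set z : ℂ := -(t⁻¹ : ℝ) with hz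
  have hz0 : z ≠ 0 := by
    simp [hz, Complex.ext_iff, h.ne']
  have hzmem : z ∉ spectrum ℂ (P₀ * S) := by
    intro hmem
    have h1 : z ∈ spectrum ℂ (Q * (Q * S)) := by rwa [← mul_assoc, hQQ]
    have h2 : z ∈ spectrum ℂ ((Q * S) * Q) :=
      (spectrum.unit_mem_mul_comm (r := Units.mk0 z hz0)).mp h1
    rw [mul_assoc] at h2
    have hres := (IsSelfAdjoint.of_nonneg hQSQ).spectrumRestricts
    have h3 : Complex.reCLM z ∈ spectrum ℝ (Q * S * Q) := hres.apply_mem h2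
    have h4 : (0:ℝ) ≤ Complex.reCLM z := spectrum_nonneg_of_nonneg hQSQ h3
    simp only [hz, Complex.reCLM_apply, Complex.neg_re, Complex.ofReal_re] at h4
    linarith [inv_pos.mpr h]
  rw [spectrum.notMem_iff] at hzmem
  have key : (1 : H →L[ℂ] H) + t • (P₀ * S)
      = (-(t:ℂ)) • (algebraMap ℂ (H →L[ℂ] H) z - P₀ * S) := by
    rw [Algebra.algebraMap_eq_smul_one, smul_sub, smul_smul]
    have : -(t:ℂ) * z = 1 := by
      rw [hz]; push_cast
      field_simp
      exact div_self (by exact_mod_cast h.ne')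
    rw [this, one_smul, neg_smul, sub_neg_eq_add, Complex.coe_smul]
  rw [key]
  have hne : -(t:ℂ) ≠ 0 := by simpa using ne_of_gt h
  exact (IsUnit.smul (Units.mk0 _ hne) hzmem)

/-- For positive operators `P₀, S` on a complex Hilbert space, the map
`t ↦ (I + tP₀S)⁻¹P₀` from `[0, ∞)` into `ℒ(H)` is infinitely differentiable (of class `C^∞`
with respect to the operator norm). -/
theorem stmt_5 {H : Type*} [NormedAddCommGroup H] [InnerProductSpace ℂ H] [CompleteSpace H]
    (P₀ S : H →L[ℂ] H) (hP₀ : P₀.IsPositive) (hS : S.IsPositive) :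
    ContDiffOn ℝ (⊤ : ℕ∞) (fun t : ℝ => Ring.inverse (1 + t • (P₀ * S)) * P₀) (Set.Ici 0) := by
  intro t ht
  have hU := aux_isUnit P₀ S hP₀ hS ht
  have h1 : ContDiffAt ℝ (⊤ : ℕ∞) (fun t : ℝ => 1 + t • (P₀ * S)) t :=
    contDiffAt_const.add (contDiffAt_id.smul contDiffAt_const)
  have h2 : ContDiffAt ℝ (⊤ : ℕ∞) (Ring.inverse : (H →L[ℂ] H) → (H →L[ℂ] H)) (1 + t • (P₀ * S)) := by
    have := contDiffAt_ringInverse ℝ (n := (⊤ : ℕ∞)) hU.unit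
    rwa [hU.unit_spec] at this
  exact ((h2.comp t h1).mul contDiffAt_const).contDiffWithinAt
end

section
/- Let H be a complex Hilbert space, let P, S ∈ Σ⁺(H), and let t ≥ 0. Then the operators I + tPS and I + tP^{1/2}SP^{1/2} are boundedly invertible and the identity (I + tPS)⁻¹ = I − t P^{1/2} (I + t P^{1/2} S P^{1/2})⁻¹ P^{1/2} S holds in ℒ(H). -/
/-! With `u = R` and `v = t • R S`, the operators `1 + t P S` and `1 + t R S R` are `1 + u v` and
`1 + v u`. The second one is `1` plus a positive operator, hence bounded below and invertible;
Jacobson's identity `(1 + u v)⁻¹ = 1 - u (1 + v u)⁻¹ v`, valid in any ring, transfers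
invertibility to the first one and gives the formula. -/

section Jacobson

variable {A : Type*} [Ring A] {u v : A}

theorem one_add_mul_mul_one_sub_mul_inverse_mul (h : IsUnit (1 + v * u)) :
    (1 + u * v) * (1 - u * Ring.inverse (1 + v * u) * v) = 1 :=
  calc _ = 1 + u * v - u * ((1 + v * u) * Ring.inverse (1 + v * u)) * v := by noncomm_ring
    _ = 1 := by rw [Ring.mul_inverse_cancel _ h]; noncomm_ring

theorem one_sub_mul_inverse_mul_mul_one_add_mul (h : IsUnit (1 + v * u)) :
    (1 - u * Ring.inverse (1 + v * u) * v) * (1 + u * v) = 1 :=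
  calc _ = 1 + u * v - u * (Ring.inverse (1 + v * u) * (1 + v * u)) * v := by noncomm_ring
    _ = 1 := by rw [Ring.inverse_mul_cancel _ h]; noncomm_ring

theorem isUnit_one_add_mul_comm (h : IsUnit (1 + v * u)) : IsUnit (1 + u * v) :=
  ⟨⟨_, _, one_add_mul_mul_one_sub_mul_inverse_mul h, one_sub_mul_inverse_mul_mul_one_add_mul h⟩,
    rfl⟩

theorem Ring.inverse_one_add_mul_comm (h : IsUnit (1 + v * u)) :
    Ring.inverse (1 + u * v) = 1 - u * Ring.inverse (1 + v * u) * v :=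
  Ring.inverse_unit
    ⟨_, _, one_add_mul_mul_one_sub_mul_inverse_mul h, one_sub_mul_inverse_mul_mul_one_add_mul h⟩

end Jacobson

namespace ContinuousLinearMap

open scoped InnerProductSpace

theorem IsPositive.real_smul_of_nonneg {H : Type*} [NormedAddCommGroup H]
    [InnerProductSpace ℂ H] {T : H →L[ℂ] H} (hT : T.IsPositive) {t : ℝ} (ht : 0 ≤ t) :
    (t • T).IsPositive := by
  simpa only [RCLike.real_smul_eq_coe_smul (K := ℂ)] using
    hT.smul_of_nonneg (RCLike.ofReal_nonneg.mpr ht)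

variable {𝕜 H : Type*} [RCLike 𝕜] [NormedAddCommGroup H] [InnerProductSpace 𝕜 H] [CompleteSpace H]

theorem IsPositive.conj_isSelfAdjoint {S R : H →L[𝕜] H} (hS : S.IsPositive)
    (hR : IsSelfAdjoint R) : (R * S * R).IsPositive := by
  have h := hS.conj_adjoint R
  rwa [hR.adjoint_eq, ← mul_def, ← mul_def, ← mul_assoc] at h

theorem IsPositive.isUnit_one_add {T : H →L[𝕜] H} (hT : T.IsPositive) : IsUnit (1 + T) := by
  refine isUnit_of_forall_le_norm_inner_map (1 + T) one_pos fun x => ?_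
  calc ‖x‖ ^ 2 * (1 : NNReal) = RCLike.re ⟪x, x⟫_𝕜 := by simp
    _ ≤ RCLike.re ⟪(1 + T) x, x⟫_𝕜 := by
      simpa only [add_apply, one_apply_eq_self, inner_add_left, map_add, le_add_iff_nonneg_right]
        using hT.re_inner_nonneg_left x
    _ ≤ ‖⟪(1 + T) x, x⟫_𝕜‖ := RCLike.re_le_norm _

end ContinuousLinearMap

theorem stmt_9_general {H : Type*} [NormedAddCommGroup H] [InnerProductSpace ℂ H] [CompleteSpace H]
    (P S R : H →L[ℂ] H) (hS : S.IsPositive)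
    (hR : R.IsPositive) (hR2 : R * R = P) (t : ℝ) (ht : 0 ≤ t) :
    IsUnit (1 + t • (P * S)) ∧ IsUnit (1 + t • (R * S * R)) ∧
      Ring.inverse (1 + t • (P * S))
        = 1 - t • (R * Ring.inverse (1 + t • (R * S * R)) * (R * S)) := by
  have hvu : t • (R * S) * R = t • (R * S * R) := smul_mul_assoc _ _ _
  have huv : R * (t • (R * S)) = t • (P * S) := by rw [mul_smul_comm, ← mul_assoc, hR2]
  have hunit : IsUnit (1 + t • (R * S) * R) := hvu ▸
    ((hS.conj_isSelfAdjoint hR.isSelfAdjoint).real_smul_of_nonneg ht).isUnit_one_add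
  refine ⟨huv ▸ isUnit_one_add_mul_comm hunit, hvu ▸ hunit, ?_⟩
  rw [← huv, Ring.inverse_one_add_mul_comm hunit, hvu, mul_smul_comm]

/-- For positive operators `P, S` on a complex Hilbert space, `t ≥ 0`, and `R` the
(unique) positive square root of `P` (i.e. `R` positive with `R·R = P`), the operators
`I + tPS` and `I + tRSR` are boundedly invertible, and
`(I + tPS)⁻¹ = I − t R (I + t R S R)⁻¹ R S` in `ℒ(H)`. -/
theorem stmt_9 {H : Type*} [NormedAddCommGroup H] [InnerProductSpace ℂ H] [CompleteSpace H]
    (P S R : H →L[ℂ] H) (hP : P.IsPositive) (hS : S.IsPositive)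
    (hR : R.IsPositive) (hR2 : R * R = P) (t : ℝ) (ht : 0 ≤ t) :
    IsUnit (1 + t • (P * S)) ∧ IsUnit (1 + t • (R * S * R)) ∧
      Ring.inverse (1 + t • (P * S))
        = 1 - t • (R * Ring.inverse (1 + t • (R * S * R)) * (R * S)) :=
  stmt_9_general P S R hS hR hR2 t ht
end

section
/- Let H be a complex Hilbert space, let P, S ∈ Σ⁺(H), and let t ≥ 0. Then the identity (I + tPS)⁻¹ P = P^{1/2} (I + t P^{1/2} S P^{1/2})⁻¹ P^{1/2} holds in ℒ(H), where both inverses exist as bounded operators. -/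
/-!
Write `P = R * R` and `X = t • (R * S)`, so that `t • (P * S) = R * X` and `t • (R * S * R) = X * R`.
Since `1 + a * b` and `1 + b * a` are invertible together (Jacobson's lemma), with
`(1 + a * b)⁻¹ * a = a * (1 + b * a)⁻¹`, everything reduces to the invertibility of
`1 + t • (R * S * R)`, which holds because `t • (R * S * R)` is positive.
-/

section Ring

variable {A : Type*} [Ring A]

theorem isUnit_one_add_mul_comm_s10 (a b : A) : IsUnit (1 + a * b) ↔ IsUnit (1 + b * a) := by
  simpa only [spectrum.mem_iff, Units.val_neg, Units.val_one, map_neg, map_one, neg_sub_left,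
    IsUnit.neg_iff, not_iff_not, add_comm (1 : A)] using
    spectrum.unit_mem_mul_comm (R := ℤ) (a := a) (b := b) (r := -1)

theorem Ring.inverse_one_add_mul_mul_s10 (a b : A) :
    Ring.inverse (1 + a * b) * a = a * Ring.inverse (1 + b * a) := by
  by_cases h : IsUnit (1 + b * a)
  · have h' : IsUnit (1 + a * b) := (isUnit_one_add_mul_comm_s10 a b).mpr h
    calc Ring.inverse (1 + a * b) * a
        = Ring.inverse (1 + a * b) * ((1 + a * b) * a) * Ring.inverse (1 + b * a) := by
          rw [show (1 + a * b) * a = a * (1 + b * a) by noncomm_ring, ← mul_assoc,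
            mul_assoc _ _ (Ring.inverse _), Ring.mul_inverse_cancel _ h, mul_one]
      _ = a * Ring.inverse (1 + b * a) := by
          rw [← mul_assoc, Ring.inverse_mul_cancel _ h', one_mul]
  · have h' : ¬IsUnit (1 + a * b) := mt (isUnit_one_add_mul_comm_s10 a b).mp h
    rw [Ring.inverse_non_unit _ h, Ring.inverse_non_unit _ h', zero_mul, mul_zero]

end Ring

theorem CStarAlgebra.isUnit_one_add_of_nonneg_s10 {A : Type*} [CStarAlgebra A] [PartialOrder A]
    [StarOrderedRing A] {a : A} (ha : 0 ≤ a) : IsUnit (1 + a) :=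
  CStarAlgebra.isUnit_of_le 1 (le_add_of_nonneg_right ha)

theorem stmt_10_general {H : Type*} [NormedAddCommGroup H] [InnerProductSpace ℂ H] [CompleteSpace H]
    (P S R : H →L[ℂ] H) (hS : S.IsPositive)
    (hR : R.IsPositive) (hR2 : R * R = P) (t : ℝ) (ht : 0 ≤ t) :
    IsUnit (1 + t • (P * S)) ∧ IsUnit (1 + t • (R * S * R)) ∧
      Ring.inverse (1 + t • (P * S)) * P
        = R * Ring.inverse (1 + t • (R * S * R)) * R := by
  subst hR2
  have hPS : t • (R * R * S) = R * (t • (R * S)) := by rw [mul_smul_comm, mul_assoc]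
  have hRSR : t • (R * S * R) = t • (R * S) * R := (smul_mul_assoc ..).symm
  have hunit : IsUnit (1 + t • (R * S * R)) :=
    CStarAlgebra.isUnit_one_add_of_nonneg_s10 <| smul_nonneg ht <|
      hR.isSelfAdjoint.conjugate_nonneg <| (S.nonneg_iff_isPositive).mpr hS
  refine ⟨?_, hunit, ?_⟩
  · rw [hPS, isUnit_one_add_mul_comm_s10, ← hRSR]
    exact hunit
  · rw [hPS, ← mul_assoc, Ring.inverse_one_add_mul_mul_s10, hRSR]

/-- For positive operators `P, S` on a complex Hilbert space, `t ≥ 0`, and `R` the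
(unique) positive square root of `P` (i.e. `R` positive with `R·R = P`), the operators
`I + tPS` and `I + tRSR` are boundedly invertible, and
`(I + tPS)⁻¹ P = R (I + t R S R)⁻¹ R` in `ℒ(H)`. -/
theorem stmt_10 {H : Type*} [NormedAddCommGroup H] [InnerProductSpace ℂ H] [CompleteSpace H]
    (P S R : H →L[ℂ] H) (hP : P.IsPositive) (hS : S.IsPositive)
    (hR : R.IsPositive) (hR2 : R * R = P) (t : ℝ) (ht : 0 ≤ t) :
    IsUnit (1 + t • (P * S)) ∧ IsUnit (1 + t • (R * S * R)) ∧
      Ring.inverse (1 + t • (P * S)) * P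
        = R * Ring.inverse (1 + t • (R * S * R)) * R :=
  stmt_10_general P S R hS hR hR2 t ht
end

section
/- Let H be a complex Hilbert space and let A : D(A) ⊆ H → H be a densely defined linear operator. Let P, S ∈ ℒ(H) with P self-adjoint, suppose Sx ∈ D(A) for every x ∈ H and T ∈ ℒ(H) satisfies Tx = A(Sx) for all x ∈ H, and suppose there is a constant C ≥ 0 such that |⟨Px, Ay⟩ + ⟨Ax, Py⟩| ≤ C‖x‖‖y‖ for all x, y ∈ D(A). Then for all x, y ∈ D(A), |⟨PSPx, Ay⟩ + ⟨Ax, PSPy⟩| ≤ (2C‖S‖‖P‖ + ‖T + T*‖‖P‖²)‖x‖‖y‖. (In the notation of the paper: if P ∈ D(𝒜) and AS is bounded, then PSP ∈ D(𝒜).) -/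
open scoped InnerProductSpace

/-!
With `u = SPx` and `v = SPy`, which lie in `D(A)` with `Au = TPx` and `Av = TPy`, one has
`φ_P(u, y) + φ_P(x, v) = ⟨PSPx, Ay⟩ + ⟨Ax, PSPy⟩ + ⟨TPx, Py⟩ + ⟨Px, TPy⟩`, and the last two terms
add up to `⟨(T + T*)Px, Py⟩`. So the form of `PSP` is `φ_P(u, y) + φ_P(x, v) - ⟨(T + T*)Px, Py⟩`,
and each of the three terms is bounded by the hypothesis on `φ_P` or by the operator norms.
-/

namespace DensePairing

variable {H : Type*} [NormedAddCommGroup H] [InnerProductSpace ℂ H] {D : Submodule ℂ H}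

/-- The paper's `φ_P`. -/
noncomputable def form (A : D →ₗ[ℂ] H) (P : H →L[ℂ] H) (x y : D) : ℂ :=
  ⟪P (x : H), A y⟫_ℂ + ⟪A x, P (y : H)⟫_ℂ

theorem inner_add_inner_eq_form_add_form_sub [CompleteSpace H] (A : D →ₗ[ℂ] H)
    (P T : H →L[ℂ] H) {x y u v : D} (hu : A u = T (P x)) (hv : A v = T (P y)) :
    ⟪P (u : H), A y⟫_ℂ + ⟪A x, P (v : H)⟫_ℂ =
      form A P u y + form A P x v - ⟪(T + ContinuousLinearMap.adjoint T) (P x), P y⟫_ℂ := by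
  have hcross : ⟪(T + ContinuousLinearMap.adjoint T) (P x), P y⟫_ℂ =
      ⟪A u, P (y : H)⟫_ℂ + ⟪P (x : H), A v⟫_ℂ := by
    rw [hu, hv, add_apply, inner_add_left,
      ContinuousLinearMap.adjoint_inner_left]
  rw [hcross, form, form]
  ring

end DensePairing

open DensePairing in
theorem stmt_14_general {H : Type*} [NormedAddCommGroup H] [InnerProductSpace ℂ H] [CompleteSpace H]
    (D : Submodule ℂ H) (A : D →ₗ[ℂ] H)
    (P S : H →L[ℂ] H)
    (hSD : ∀ x : H, S x ∈ D) (T : H →L[ℂ] H) (hT : ∀ x : H, T x = A ⟨S x, hSD x⟩)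
    (C : ℝ) (hC0 : 0 ≤ C)
    (hC : ∀ x y : D, ‖⟪P (x : H), A y⟫_ℂ + ⟪A x, P (y : H)⟫_ℂ‖ ≤ C * ‖(x : H)‖ * ‖(y : H)‖) :
    ∀ x y : D,
      ‖⟪P (S (P (x : H))), A y⟫_ℂ + ⟪A x, P (S (P (y : H)))⟫_ℂ‖
        ≤ (2 * C * ‖S‖ * ‖P‖ + ‖T + ContinuousLinearMap.adjoint T‖ * ‖P‖ ^ 2)
            * ‖(x : H)‖ * ‖(y : H)‖ := by
  intro x y
  set u : D := ⟨S (P x), hSD _⟩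
  set v : D := ⟨S (P y), hSD _⟩
  have hSP (z : H) : ‖S (P z)‖ ≤ ‖S‖ * (‖P‖ * ‖z‖) := S.le_opNorm_of_le (P.le_opNorm z)
  have hcross : ‖⟪(T + ContinuousLinearMap.adjoint T) (P x), P y⟫_ℂ‖ ≤
      ‖T + ContinuousLinearMap.adjoint T‖ * (‖P‖ * ‖(x : H)‖) * (‖P‖ * ‖(y : H)‖) :=
    (norm_inner_le_norm _ _).trans <| mul_le_mul
      ((T + ContinuousLinearMap.adjoint T).le_opNorm_of_le (P.le_opNorm x)) (P.le_opNorm y)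
      (norm_nonneg _) (by positivity)
  change ‖⟪P (u : H), A y⟫_ℂ + ⟪A x, P (v : H)⟫_ℂ‖ ≤ _
  rw [inner_add_inner_eq_form_add_form_sub A P T (hT _).symm (hT _).symm]
  calc _ ≤ ‖form A P u y‖ + ‖form A P x v‖
        + ‖⟪(T + ContinuousLinearMap.adjoint T) (P x), P y⟫_ℂ‖ :=
        (norm_sub_le _ _).trans (by gcongr; exact norm_add_le _ _)
    _ ≤ C * ‖(u : H)‖ * ‖(y : H)‖ + C * ‖(x : H)‖ * ‖(v : H)‖
        + ‖T + ContinuousLinearMap.adjoint T‖ * (‖P‖ * ‖(x : H)‖) * (‖P‖ * ‖(y : H)‖) := by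
        gcongr
        exacts [hC u y, hC x v]
    _ ≤ C * (‖S‖ * (‖P‖ * ‖(x : H)‖)) * ‖(y : H)‖ + C * ‖(x : H)‖ * (‖S‖ * (‖P‖ * ‖(y : H)‖))
        + ‖T + ContinuousLinearMap.adjoint T‖ * (‖P‖ * ‖(x : H)‖) * (‖P‖ * ‖(y : H)‖) := by
        gcongr
        exacts [hSP x, hSP y]
    _ = _ := by ring

/-- Let `A : D(A) ⊆ H → H` be densely defined, `P ∈ ℒ(H)` self-adjoint,
`S ∈ ℒ(H)` with `Sx ∈ D(A)` for all `x` and `T ∈ ℒ(H)` the bounded extension of `AS`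
(`Tx = A(Sx)`). If `|⟨Px, Ay⟩ + ⟨Ax, Py⟩| ≤ C‖x‖‖y‖` on `D(A) × D(A)` for some `C ≥ 0`, then
`|⟨PSPx, Ay⟩ + ⟨Ax, PSPy⟩| ≤ (2C‖S‖‖P‖ + ‖T + T*‖‖P‖²)‖x‖‖y‖` on `D(A) × D(A)`.
(If `P ∈ D(𝒜)` and `AS` is bounded, then `PSP ∈ D(𝒜)`.) -/
theorem stmt_14 {H : Type*} [NormedAddCommGroup H] [InnerProductSpace ℂ H] [CompleteSpace H]
    (D : Submodule ℂ H) (hD : Dense (D : Set H)) (A : D →ₗ[ℂ] H)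
    (P S : H →L[ℂ] H) (hPsa : IsSelfAdjoint P)
    (hSD : ∀ x : H, S x ∈ D) (T : H →L[ℂ] H) (hT : ∀ x : H, T x = A ⟨S x, hSD x⟩)
    (C : ℝ) (hC0 : 0 ≤ C)
    (hC : ∀ x y : D, ‖⟪P (x : H), A y⟫_ℂ + ⟪A x, P (y : H)⟫_ℂ‖ ≤ C * ‖(x : H)‖ * ‖(y : H)‖) :
    ∀ x y : D,
      ‖⟪P (S (P (x : H))), A y⟫_ℂ + ⟪A x, P (S (P (y : H)))⟫_ℂ‖
        ≤ (2 * C * ‖S‖ * ‖P‖ + ‖T + ContinuousLinearMap.adjoint T‖ * ‖P‖ ^ 2)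
            * ‖(x : H)‖ * ‖(y : H)‖ :=
  stmt_14_general D A P S hSD T hT C hC0 hC
end
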